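/- Gonzalez' farthest-point greedy algorithm is a 2-approximation for the ℓ-center clustering problem in any metric space: if T is the set of ℓ centers it outputs on a finite point set P with |P| > ℓ, and T* is any set of ℓ points of the metric space, then max_{v∈P} min_{u∈T} dist(v,u) ≤ 2 · max_{v∈P} min_{u∈T*} dist(v,u). -/
import Mathlib


/-- `c` is a run of Gonzalez' farthest-point greedy algorithm on `P`:
`c 0 ∈ P`, and each next center `c (i+1)` is a point of `P` maximizing the distance to
the set of previously chosen centers. -/
def IsGonzalez {X : Type*} [MetricSpace X] (P : Finset X) (c : ℕ → X) : Prop :=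
  c 0 ∈ P ∧ ∀ i : ℕ, c (i + 1) ∈ P ∧ ∀ v ∈ P,
    ((Finset.range (i + 1)).inf' ⟨i, Finset.self_mem_range_succ i⟩
        fun j => dist v (c j)) ≤
      ((Finset.range (i + 1)).inf' ⟨i, Finset.self_mem_range_succ i⟩
        fun j => dist (c (i + 1)) (c j))

/-- Gonzalez' algorithm is a 2-approximation for ℓ-center clustering in any metric space:
its covering radius is at most twice that of any set of `ℓ` centers. -/
theorem gonzalez_two_approx {X : Type*} [MetricSpace X]
    (P : Finset X) (hP : P.Nonempty) (c : ℕ → X) (hc : IsGonzalez P c)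
    (ℓ : ℕ) (hℓ : 0 < ℓ) (hcard : ℓ < P.card)
    (Tstar : Finset X) (hTs : Tstar.card = ℓ) (hTsne : Tstar.Nonempty) :
    (P.sup' hP fun v =>
        (Finset.range ℓ).inf' (Finset.nonempty_range_iff.mpr hℓ.ne') fun j => dist v (c j)) ≤
      2 * (P.sup' hP fun v => Tstar.inf' hTsne fun u => dist v u) := by
  obtain ⟨v, hvP, hveq⟩ := P.exists_mem_eq_sup' hP
    (fun v => (Finset.range ℓ).inf' (Finset.nonempty_range_iff.mpr hℓ.ne') fun j => dist v (c j))
  rw [hveq]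
  set r := (Finset.range ℓ).inf' (Finset.nonempty_range_iff.mpr hℓ.ne')
    (fun j => dist v (c j)) with hr
  set Rs := P.sup' hP fun v => Tstar.inf' hTsne fun u => dist v u with hRs
  -- all centers are in P
  have hcP : ∀ i, c i ∈ P := by
    intro i
    cases i with
    | zero => exact hc.1
    | succ n => exact (hc.2 n).1
  -- the augmented sequence of points
  set p : ℕ → X := fun i => if i < ℓ then c i else v with hp
  have hpP : ∀ i, p i ∈ P := by
    intro i
    simp only [hp]
    split <;> [exact hcP i; exact hvP]
  -- pairwise distances ≥ r
  have hpair : ∀ i j : ℕ, i < j → j ≤ ℓ → r ≤ dist (p j) (p i) := by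
    intro i j hij hjl
    have hiℓ : i < ℓ := lt_of_lt_of_le hij hjl
    have hpi : p i = c i := if_pos hiℓ
    rcases eq_or_lt_of_le hjl with hje | hjl
    · -- j = ℓ, p j = v
      have hpj : p j = v := by simp [hp, hje]
      rw [hpj, hpi]
      exact Finset.inf'_le _ (Finset.mem_range.mpr hiℓ)
    · have hpj : p j = c j := if_pos hjl
      rw [hpj, hpi]
      obtain ⟨k, hk⟩ : ∃ k, j = k + 1 := ⟨j - 1, by omega⟩
      subst hk
      have hg := (hc.2 k).2 v hvP
      obtain ⟨t0, ht0, heq0⟩ := (Finset.range (k + 1)).exists_mem_eq_inf'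
        ⟨k, Finset.self_mem_range_succ k⟩ (fun t => dist v (c t))
      have hr_le : r ≤ (Finset.range (k + 1)).inf' ⟨k, Finset.self_mem_range_succ k⟩
          (fun t => dist v (c t)) := by
        rw [heq0]
        refine Finset.inf'_le _ (Finset.mem_range.mpr ?_)
        have := Finset.mem_range.mp ht0
        omega
      calc r ≤ _ := hr_le
        _ ≤ _ := hg
        _ ≤ dist (c (k + 1)) (c i) := Finset.inf'_le _ (Finset.mem_range.mpr hij)
  -- nearest Tstar-center to each p i
  have hf : ∀ i : ℕ, ∃ u ∈ Tstar, (Tstar.inf' hTsne fun u => dist (p i) u) = dist (p i) u :=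
    fun i => Tstar.exists_mem_eq_inf' hTsne _
  choose f hfmem hfeq using hf
  have hinf_le : ∀ i : ℕ, dist (p i) (f i) ≤ Rs := by
    intro i
    rw [← hfeq i]
    exact Finset.le_sup' (fun w => Tstar.inf' hTsne fun u => dist w u) (hpP i)
  -- pigeonhole on range (ℓ+1)
  obtain ⟨a, ha, b, hb, hab, hfab⟩ :=
    Finset.exists_ne_map_eq_of_card_lt_of_maps_to
      (s := Finset.range (ℓ + 1)) (t := Tstar)
      (by rw [Finset.card_range, hTs]; omega)
      (fun a _ => hfmem a)
  rw [Finset.mem_range] at ha hb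
  rcases lt_or_gt_of_ne hab with h | h
  · have := hpair a b h (by omega)
    calc r ≤ dist (p b) (p a) := this
      _ ≤ dist (p b) (f b) + dist (f b) (p a) := by
          exact dist_triangle _ _ _
      _ ≤ Rs + Rs := add_le_add (hinf_le b) (by rw [dist_comm, ← hfab]; exact hinf_le a)
      _ = 2 * Rs := (two_mul Rs).symm
  · have := hpair b a h (by omega)
    calc r ≤ dist (p a) (p b) := this
      _ ≤ dist (p a) (f a) + dist (f a) (p b) := by
          exact dist_triangle _ _ _
      _ ≤ Rs + Rs := add_le_add (hinf_le a) (by rw [dist_comm, hfab]; exact hinf_le b)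
      _ = 2 * Rs := (two_mul Rs).symm
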